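/- For every L ≥ 1 and every set A of spin configurations on Λ_L, the spin marginal of P_L^{±,c,h} decomposes as P_L^{±,c,h}(A × {0,1}^{Λ_L}) = Σ_M P_L^{±,c,h}(M_L = M) · ℙ_L^{±,J}(A | M_L = M), where the sum runs over all values M attainable by M_L; that is, conditioned on its total magnetization, the spin marginal of P_L^{±,c,h} coincides with the zero-field Ising measure conditioned on the same magnetization. -/

import Mathlib

/-!
Summing out the salt at fixed `N_L`, the weight of a spin configuration `σ` becomes
`e^{J Σ σ_x σ_y} · e^{h M_L(σ)} · W(σ)`, where `W(σ)` is the salt partition function in the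
background `σ`. Relabelling the sites by a permutation does not change `W`, and any two
configurations with the same magnetization are related by such a relabelling, so the last two
factors depend on `σ` only through `M_L(σ)`. Conditioned on `M_L = M` they are constant, and
what remains is the zero-field Ising weight conditioned on `M_L = M`.
-/

open scoped BigOperators Classical
open Filter

noncomputable section

abbrev Site (d : ℕ) := Fin d → ℤ

/-- The box of `L^d` sites in `ℤ^d` (approximately) centered at the origin. -/
def box (d L : ℕ) : Finset (Site d) :=
  Fintype.piFinset fun _ : Fin d => Finset.Ico (-(L : ℤ) / 2) ((L : ℤ) - (L : ℤ) / 2)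

/-- Ising spin configurations in the box (true = +1, false = -1). -/
abbrev Spins (d L : ℕ) := {x : Site d // x ∈ box d L} → Bool

/-- Salt configurations in the box (true = occupied). -/
abbrev Salts (d L : ℕ) := {x : Site d // x ∈ box d L} → Bool

/-- Spin value (±1) of a Boolean spin. -/
def sval (b : Bool) : ℤ := if b then 1 else -1

/-- Overall magnetization `M_L`. -/
def magn (d L : ℕ) (σ : Spins d L) : ℤ := ∑ x, sval (σ x)

/-- Total amount of salt `N_L`. -/
def saltNum (d L : ℕ) (S : Salts d L) : ℕ := ∑ x, if S x then 1 else 0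

/-- Amount of salt on plus spins `Q_L`. -/
def saltPlus (d L : ℕ) (σ : Spins d L) (S : Salts d L) : ℕ :=
  ∑ x, if S x && σ x then 1 else 0

/-- Spin field extended by the boundary condition `bc` outside the box. -/
def spin (d L : ℕ) (bc : Bool) (σ : Spins d L) (x : Site d) : ℤ :=
  if h : x ∈ box d L then sval (σ ⟨x, h⟩) else sval bc

/-- The set of nearest neighbors of a site. -/
def nbrs {d : ℕ} (x : Site d) : Finset (Site d) :=
  Finset.image
    (fun p : Fin d × Bool => Function.update x p.1 (x p.1 + if p.2 then 1 else -1))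
    Finset.univ

/-- `Σ_{⟨x,y⟩, x ∈ Λ_L} σ_x σ_y`, each nearest-neighbor pair counted once. -/
def pairSum (d L : ℕ) (bc : Bool) (σ : Spins d L) : ℝ :=
  ∑ x ∈ box d L, ∑ y ∈ nbrs x,
    (if y ∈ box d L then (1 : ℝ) / 2 else 1) * (spin d L bc σ x : ℝ) * (spin d L bc σ y : ℝ)

/-- Partition function of the zero-field Ising model. -/
def isingZ (d L : ℕ) (J : ℝ) (bc : Bool) : ℝ :=
  ∑ σ : Spins d L, Real.exp (J * pairSum d L bc σ)

/-- Expectation `E_L^{±,J}` under the zero-field Ising measure. -/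
def isingExp (d L : ℕ) (J : ℝ) (bc : Bool) (f : Spins d L → ℝ) : ℝ :=
  (∑ σ : Spins d L, f σ * Real.exp (J * pairSum d L bc σ)) / isingZ d L J bc

/-- Probability `ℙ_L^{±,J}` under the zero-field Ising measure. -/
def isingProb (d L : ℕ) (J : ℝ) (bc : Bool) (E : Spins d L → Prop) : ℝ :=
  isingExp d L J bc fun σ => if E σ then 1 else 0

/-- `φ_L^{±}(h) = L^{-d} log E_L^{±,J}(e^{h M_L})`. -/
def phiL (d L : ℕ) (J : ℝ) (bc : Bool) (h : ℝ) : ℝ :=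
  ((L : ℝ) ^ d)⁻¹ * Real.log (isingExp d L J bc fun σ => Real.exp (h * (magn d L σ : ℝ)))

/-- The Hamiltonian `βH` of the solvent-solute system. -/
def hamil (d L : ℕ) (J h κ : ℝ) (bc : Bool) (σ : Spins d L) (S : Salts d L) : ℝ :=
  -J * pairSum d L bc σ - h * (magn d L σ : ℝ)
    + κ * ∑ x, (if S x then (1 : ℝ) else 0) * (1 - (sval (σ x) : ℝ)) / 2

/-- The fixed amount of salt `⌊c L^d⌋`. -/
def NLtarget (d L : ℕ) (c : ℝ) : ℤ := ⌊c * (L : ℝ) ^ d⌋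

/-- `P_L^{±,c,h}(E)`: the Gibbs measure conditioned on `N_L = ⌊c L^d⌋`. -/
def condProb (d L : ℕ) (J h κ c : ℝ) (bc : Bool) (E : Spins d L → Salts d L → Prop) : ℝ :=
  (∑ σ : Spins d L, ∑ S : Salts d L,
      if E σ S ∧ (saltNum d L S : ℤ) = NLtarget d L c
      then Real.exp (-hamil d L J h κ bc σ S) else 0) /
  (∑ σ : Spins d L, ∑ S : Salts d L,
      if (saltNum d L S : ℤ) = NLtarget d L c
      then Real.exp (-hamil d L J h κ bc σ S) else 0)

/-- Expectation under `P_L^{±,c,h}`. -/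
def condExp (d L : ℕ) (J h κ c : ℝ) (bc : Bool) (f : Spins d L → Salts d L → ℝ) : ℝ :=
  (∑ σ : Spins d L, ∑ S : Salts d L,
      if (saltNum d L S : ℤ) = NLtarget d L c
      then f σ S * Real.exp (-hamil d L J h κ bc σ S) else 0) /
  (∑ σ : Spins d L, ∑ S : Salts d L,
      if (saltNum d L S : ℤ) = NLtarget d L c
      then Real.exp (-hamil d L J h κ bc σ S) else 0)

/-- Legendre transform `φ*(m) = sup_h (m h - φ(h))`. -/
def legendre (φ : ℝ → ℝ) (m : ℝ) : ℝ := ⨆ h : ℝ, (m * h - φ h)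

/-- Entropy function of the Bernoulli distribution (finite branch). -/
def entS (p : ℝ) : ℝ := p * Real.log p + (1 - p) * Real.log (1 - p)

/-- Mole fraction `p_+ = 2θc/(1+m)`. -/
def pPlus (m θ c : ℝ) : ℝ := 2 * θ * c / (1 + m)

/-- Mole fraction `p_- = 2(1-θ)c/(1-m)`. -/
def pMinus (m θ c : ℝ) : ℝ := 2 * (1 - θ) * c / (1 - m)

/-- `Ξ(m,θ;c)` (finite branch). -/
def Xi (m θ c : ℝ) : ℝ :=
  -((1 + m) / 2) * entS (pPlus m θ c) - ((1 - m) / 2) * entS (pMinus m θ c)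

/-- Entropy function with the convention `S(p) = +∞` for `p ∉ [0,1]`. -/
def entSE (p : ℝ) : EReal := if 0 ≤ p ∧ p ≤ 1 then ((entS p : ℝ) : EReal) else ⊤

/-- `-Ξ(m,θ;c)` as an extended real (`+∞` where some mole fraction leaves `[0,1]`). -/
def negXiE (m θ c : ℝ) : EReal :=
  (((1 + m) / 2 : ℝ) : EReal) * entSE (pPlus m θ c)
    + (((1 - m) / 2 : ℝ) : EReal) * entSE (pMinus m θ c)

/-- `𝒢_{h,c}(m,θ) = -hm - κθc - Ξ(m,θ;c) + φ*(m)` as an extended real. -/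
def curlyGE (h c κ : ℝ) (φs : ℝ → ℝ) (m θ : ℝ) : EReal :=
  ((-(h * m) - κ * θ * c + φs m : ℝ) : EReal) + negXiE m θ c

/-- `G_{h,c}(m) = inf_{θ ∈ [0,1]} 𝒢_{h,c}(m,θ)`. -/
def GE (h c κ : ℝ) (φs : ℝ → ℝ) (m : ℝ) : EReal :=
  ⨅ θ ∈ Set.Icc (0 : ℝ) 1, curlyGE h c κ φs m θ

/-- Extended-real logarithm (`-∞` for nonpositive arguments). -/
def elog (x : ℝ) : EReal := if 0 < x then ((Real.log x : ℝ) : EReal) else ⊥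

open Finset

section WeightedProbability

variable {α β : Type*} [Fintype α]

def wprob (w : α → ℝ) (E : α → Prop) : ℝ :=
  (∑ a with E a, w a) / ∑ a, w a

theorem wprob_mul_eq_sum_image_fiber [DecidableEq β] (v u : α → ℝ) (f : α → β)
    (hv : ∀ a, 0 < v a) (hu : ∀ a b, f a = f b → u a = u b) (A : α → Prop) :
    wprob (fun a => v a * u a) A =
      ∑ M ∈ univ.image f, wprob (fun a => v a * u a) (fun a => f a = M) *
        (wprob v (fun a => A a ∧ f a = M) / wprob v (fun a => f a = M)) := by
  have hfiber : ∀ (P : α → Prop) (a₀ : α),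
      ∑ a with P a ∧ f a = f a₀, v a * u a =
        u a₀ * ∑ a with P a ∧ f a = f a₀, v a := by
    intro P a₀
    rw [mul_sum]
    exact sum_congr rfl fun a ha => by rw [hu a a₀ (mem_filter.1 ha).2.2, mul_comm]
  have hterm : ∀ M ∈ univ.image f,
      wprob (fun a => v a * u a) (fun a => f a = M) *
        (wprob v (fun a => A a ∧ f a = M) / wprob v (fun a => f a = M)) =
      (∑ a with A a ∧ f a = M, v a * u a) / ∑ a, v a * u a := by
    rintro M hM
    obtain ⟨a₀, -, rfl⟩ := mem_image.1 hM
    have hZ : 0 < ∑ a, v a := sum_pos (fun a _ => hv a) ⟨a₀, mem_univ _⟩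
    have hM0 : 0 < ∑ a with f a = f a₀, v a :=
      sum_pos (fun a _ => hv a) ⟨a₀, mem_filter.2 ⟨mem_univ _, rfl⟩⟩
    have hfM := hfiber (fun _ => True) a₀
    simp only [true_and] at hfM
    simp only [wprob, hfM, hfiber A a₀]
    field_simp
  rw [sum_congr rfl hterm, ← sum_div, wprob]
  congr 1
  rw [← sum_fiberwise_of_maps_to (g := f) (t := univ.image f)
    (fun a _ => mem_image_of_mem f (mem_univ a))]
  simp only [filter_filter]

end WeightedProbability

theorem exists_equiv_comp_eq_of_card_fiber_eq {ι β : Type*} [Fintype ι] [DecidableEq β]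
    {σ τ : ι → β} (h : ∀ b, #{x | σ x = b} = #{x | τ x = b}) :
    ∃ e : ι ≃ ι, σ ∘ e = τ := by
  have hcard (b : β) : Fintype.card {x // τ x = b} = Fintype.card {x // σ x = b} := by
    simp only [Fintype.card_subtype, h]
  exact ⟨Equiv.ofFiberEquiv fun b => Fintype.equivOfCardEq (hcard b),
    funext (Equiv.ofFiberEquiv_map _)⟩

section Salt

variable {d L : ℕ}

def saltEnergy (σ : Spins d L) (S : Salts d L) : ℝ :=
  ∑ x, (if S x then (1 : ℝ) else 0) * (1 - (sval (σ x) : ℝ)) / 2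

def saltWeight (κ c : ℝ) (σ : Spins d L) : ℝ :=
  ∑ S with (saltNum d L S : ℤ) = NLtarget d L c, Real.exp (-(κ * saltEnergy σ S))

theorem magn_add_card_fiber_false (σ : Spins d L) :
    magn d L σ + 2 * #{x | σ x = false} = Fintype.card {x // x ∈ box d L} := by
  have hsval (b : Bool) : sval b + 2 * (if b = false then 1 else 0) = 1 := by
    cases b <;> rfl
  calc magn d L σ + 2 * #{x | σ x = false}
      = ∑ x, (sval (σ x) + 2 * if σ x = false then 1 else 0) := by
        rw [sum_add_distrib, ← mul_sum, sum_boole, magn]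
    _ = Fintype.card {x // x ∈ box d L} := by simp only [hsval, sum_const, card_univ, nsmul_one]

theorem card_fiber_eq_of_magn_eq {σ τ : Spins d L} (hστ : magn d L σ = magn d L τ)
    (b : Bool) :
    #{x | σ x = b} = #{x | τ x = b} := by
  have hsplit (σ : Spins d L) :
      #{x | σ x = true} + #{x | σ x = false} = Fintype.card {x // x ∈ box d L} := by
    simpa using card_filter_add_card_filter_not (s := univ) (fun x => σ x = true)
  have hσ := magn_add_card_fiber_false σ
  have hτ := magn_add_card_fiber_false τ
  have hσ' := hsplit σ
  have hτ' := hsplit τ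
  cases b <;> omega

theorem saltNum_comp_equiv (S : Salts d L) (e : {x // x ∈ box d L} ≃ {x // x ∈ box d L}) :
    saltNum d L (S ∘ e) = saltNum d L S :=
  e.sum_comp fun x => if S x then 1 else 0

theorem saltEnergy_comp_equiv (σ : Spins d L) (S : Salts d L)
    (e : {x // x ∈ box d L} ≃ {x // x ∈ box d L}) :
    saltEnergy (σ ∘ e) (S ∘ e) = saltEnergy σ S :=
  e.sum_comp fun x => (if S x then (1 : ℝ) else 0) * (1 - (sval (σ x) : ℝ)) / 2

theorem saltWeight_comp_equiv (κ c : ℝ) (σ : Spins d L)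
    (e : {x // x ∈ box d L} ≃ {x // x ∈ box d L}) :
    saltWeight κ c (σ ∘ e) = saltWeight κ c σ := by
  rw [saltWeight, saltWeight, sum_filter, sum_filter]
  refine (Fintype.sum_equiv (e.symm.arrowCongr (Equiv.refl Bool)) _ _ fun S => ?_).symm
  have hS : e.symm.arrowCongr (Equiv.refl Bool) S = S ∘ e := rfl
  rw [hS, saltNum_comp_equiv, saltEnergy_comp_equiv]

theorem saltWeight_eq_of_magn_eq (κ c : ℝ) {σ τ : Spins d L}
    (hστ : magn d L σ = magn d L τ) :
    saltWeight κ c σ = saltWeight κ c τ := by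
  obtain ⟨e, rfl⟩ := exists_equiv_comp_eq_of_card_fiber_eq (card_fiber_eq_of_magn_eq hστ)
  exact (saltWeight_comp_equiv κ c σ e).symm

theorem exp_neg_hamil (J h κ : ℝ) (bc : Bool) (σ : Spins d L) (S : Salts d L) :
    Real.exp (-hamil d L J h κ bc σ S) = Real.exp (J * pairSum d L bc σ) *
      (Real.exp (h * magn d L σ) * Real.exp (-(κ * saltEnergy σ S))) := by
  rw [← Real.exp_add, ← Real.exp_add, hamil, saltEnergy]
  ring_nf

theorem sum_salt_exp_neg_hamil (J h κ c : ℝ) (bc : Bool) (σ : Spins d L) :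
    ∑ S : Salts d L, (if (saltNum d L S : ℤ) = NLtarget d L c
      then Real.exp (-hamil d L J h κ bc σ S) else 0) =
      Real.exp (J * pairSum d L bc σ) * (Real.exp (h * magn d L σ) * saltWeight κ c σ) := by
  simp only [saltWeight, exp_neg_hamil, mul_sum, sum_filter, mul_ite, mul_zero]

theorem condProb_eq_wprob (J h κ c : ℝ) (bc : Bool) (P : Spins d L → Prop) :
    condProb d L J h κ c bc (fun σ _ => P σ) =
      wprob (fun σ => Real.exp (J * pairSum d L bc σ) *
        (Real.exp (h * magn d L σ) * saltWeight κ c σ)) P := by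
  simp only [condProb, wprob, ite_and, sum_filter, sum_ite_irrel, sum_const_zero,
    ← sum_salt_exp_neg_hamil]

theorem isingProb_eq_wprob (J : ℝ) (bc : Bool) (P : Spins d L → Prop) :
    isingProb d L J bc P = wprob (fun σ => Real.exp (J * pairSum d L bc σ)) P := by
  simp only [isingProb, isingExp, isingZ, wprob, sum_filter, ite_mul, one_mul, zero_mul]

end Salt

theorem statement16_general (d L : ℕ) (J h κ c : ℝ) (bc : Bool)
    (A : Spins d L → Prop) :
    condProb d L J h κ c bc (fun σ _ => A σ) =
      ∑ M ∈ Finset.image (magn d L) Finset.univ,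
        condProb d L J h κ c bc (fun σ _ => magn d L σ = M) *
          (isingProb d L J bc (fun σ => A σ ∧ magn d L σ = M) /
            isingProb d L J bc (fun σ => magn d L σ = M)) := by
  simp only [condProb_eq_wprob, isingProb_eq_wprob]
  exact wprob_mul_eq_sum_image_fiber _ _ _ (fun σ => Real.exp_pos _)
    (fun σ τ hστ => by rw [hστ, saltWeight_eq_of_magn_eq κ c hστ]) A

/-- (Formula (2.6) of the paper.) The spin marginal of `P_L^{±,c,h}` is a
convex combination, over the attainable magnetizations `M`, of the zero-field Ising
measures conditioned on `M_L = M`. -/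
theorem statement16 (d L : ℕ) (hd : 1 ≤ d) (hL : 1 ≤ L) (J h κ c : ℝ)
    (hJ : 0 < J) (hκ : 0 < κ) (hc : c ∈ Set.Ioo (0 : ℝ) 1) (bc : Bool)
    (A : Spins d L → Prop) :
    condProb d L J h κ c bc (fun σ _ => A σ) =
      ∑ M ∈ Finset.image (magn d L) Finset.univ,
        condProb d L J h κ c bc (fun σ _ => magn d L σ = M) *
          (isingProb d L J bc (fun σ => A σ ∧ magn d L σ = M) /
            isingProb d L J bc (fun σ => magn d L σ = M)) :=
  statement16_general d L J h κ c bc A
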